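/- arXiv:2407.08511 — 3 statements merged into one kernel-verified Lean document; each statement's English description precedes it below -/
import Mathlib

section
/- For the Stieltjes case, the Nevanlinna function B satisfies for all x ≤ 0 the lower bound B(x) ≥ x(x − a_0)/b_0² − 1, and D satisfies the upper bound D(x) ≤ x. Consequently B(x) → +∞ and D(x) → −∞ as x → −∞, B has a smallest zero β_1 < 0, and D has smallest zero δ_1 = 0. -/
open Filter Topology

/-! The sign conditions make every term of the `D`-series after the first (which is `1`) positive
and every term of the `B`-series after the first two (`0` and `(x - a₀)/b₀²`) negative. Multiplying
by `x ≤ 0` gives `D x ≤ x` and `B x ≥ x (x - a₀)/b₀² - 1`, whence the limits at `-∞`. Since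
`B 0 = -1` and `B → +∞` at `-∞`, the closed zero set of `B` is nonempty, bounded below and contained
in `(-∞, 0)`, so it has a least element. -/

theorem Summable.tsum_le_sum {ι α : Type*} [AddCommGroup α] [PartialOrder α]
    [IsOrderedAddMonoid α] [TopologicalSpace α] [IsTopologicalAddGroup α] [OrderClosedTopology α]
    {f : ι → α} (hf : Summable f) (s : Finset ι) (hs : ∀ i ∉ s, f i ≤ 0) :
    ∑' i, f i ≤ ∑ i ∈ s, f i := by
  simpa [tsum_neg] using hf.neg.sum_le_tsum s fun i hi => neg_nonneg.2 (hs i hi)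

theorem tendsto_mul_sub_div_sub_atBot_atTop (a c d : ℝ) (hc : 0 < c) :
    Tendsto (fun x : ℝ => x * (x - a) / c - d) atBot atTop :=
  tendsto_atTop_add_const_right _ (-d) <|
    (tendsto_id.atBot_mul_atBot₀ (tendsto_atBot_add_const_right _ (-a) tendsto_id)).atTop_div_const hc

theorem exists_lt_isLeast_zero_of_tendsto_atBot_atTop {f : ℝ → ℝ} (hf : Continuous f)
    (hlim : Tendsto f atBot atTop) {b : ℝ} (hb : f b < 0) :
    ∃ β, β < b ∧ IsLeast {x | f x = 0} β := by
  obtain ⟨M, hMpos, hMb⟩ : ∃ M, 0 < f M ∧ M ≤ b :=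
    ((hlim.eventually_gt_atTop 0).and (eventually_le_atBot b)).exists
  obtain ⟨c, hc, hc0⟩ := intermediate_value_Icc' hMb hf.continuousOn ⟨hb.le, hMpos.le⟩
  have hcb : c < b := lt_of_le_of_ne hc.2 fun h => hb.ne (h ▸ hc0)
  obtain ⟨L, hL⟩ := eventually_atBot.1 (hlim.eventually_gt_atTop 0)
  have hbdd : BddBelow {x | f x = 0} :=
    ⟨L, fun x hx => le_of_not_ge fun hxL => (hL x hxL).ne' hx⟩
  have hleast := (isClosed_eq hf continuous_const).isLeast_csInf ⟨c, hc0⟩ hbdd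
  exact ⟨_, (hleast.2 hc0).trans_lt hcb, hleast⟩

theorem stmt5_general (P Q : ℕ → ℝ → ℝ) (B D : ℝ → ℝ) (a₀ b₀ : ℝ)
    (hb₀ : 0 < b₀)
    (hP0 : ∀ x, P 0 x = 1) (hQ0 : ∀ x, Q 0 x = 0)
    (hP1 : ∀ x, P 1 x = (x - a₀) / b₀) (hQ1 : ∀ x, Q 1 x = 1 / b₀)
    (hsummB : ∀ x : ℝ, Summable (fun k => P k x * Q k 0))
    (hsummD : ∀ x : ℝ, Summable (fun k => P k x * P k 0))
    (hB : ∀ x : ℝ, B x = -1 + x * ∑' k, P k x * Q k 0)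
    (hD : ∀ x : ℝ, D x = x * ∑' k, P k x * P k 0)
    (hsignPQ : ∀ k, 1 ≤ k → ∀ x : ℝ, x ≤ 0 → P k x * Q k 0 < 0)
    (hsignPP : ∀ k, 1 ≤ k → ∀ x : ℝ, x ≤ 0 → 0 < P k x * P k 0)
    (hBcont : Continuous B) :
    (∀ x : ℝ, x ≤ 0 → x * (x - a₀) / b₀ ^ 2 - 1 ≤ B x ∧ D x ≤ x) ∧
    Tendsto B atBot atTop ∧ Tendsto D atBot atBot ∧
    (∃ β₁ : ℝ, β₁ < 0 ∧ B β₁ = 0 ∧ ∀ x : ℝ, B x = 0 → β₁ ≤ x) ∧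
    (D 0 = 0 ∧ ∀ x : ℝ, x < 0 → D x ≠ 0) := by
  have hseriesB (x : ℝ) (hx : x ≤ 0) : ∑' k, P k x * Q k 0 ≤ (x - a₀) / b₀ ^ 2 := by
    have := (hsummB x).tsum_le_sum (Finset.range 2) fun k hk =>
      (hsignPQ k (by simp at hk; omega) x hx).le
    rwa [Finset.sum_range_succ, Finset.sum_range_one, hP0, hQ0, hP1, hQ1, mul_zero, zero_add,
      div_mul_div_comm, mul_one, ← sq] at this
  have hseriesD (x : ℝ) (hx : x ≤ 0) : 1 ≤ ∑' k, P k x * P k 0 := by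
    simpa [hP0] using (hsummD x).le_tsum 0 fun k hk =>
      (hsignPP k (Nat.one_le_iff_ne_zero.2 hk) x hx).le
  have hbound (x : ℝ) (hx : x ≤ 0) : x * (x - a₀) / b₀ ^ 2 - 1 ≤ B x ∧ D x ≤ x := by
    rw [hB, hD, mul_div_assoc]
    exact ⟨by nlinarith [hseriesB x hx], by nlinarith [hseriesD x hx]⟩
  have hBlim : Tendsto B atBot atTop :=
    tendsto_atTop_mono' atBot ((eventually_le_atBot 0).mono fun x hx => (hbound x hx).1)
      (tendsto_mul_sub_div_sub_atBot_atTop a₀ _ 1 (by positivity))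
  have hDlim : Tendsto D atBot atBot :=
    tendsto_atBot_mono' atBot ((eventually_le_atBot 0).mono fun x hx => (hbound x hx).2)
      tendsto_id
  obtain ⟨β₁, hβ₁, hzero, hleast⟩ :=
    exists_lt_isLeast_zero_of_tendsto_atBot_atTop hBcont hBlim (b := 0) (by simp [hB])
  refine ⟨hbound, hBlim, hDlim, ⟨β₁, hβ₁, hzero, fun x hx => hleast hx⟩, by simp [hD],
    fun x hx => ?_⟩
  linarith [(hbound x hx.le).2]

/-- Bounds `B(x) ≥ x(x−a₀)/b₀² − 1` and `D(x) ≤ x` for `x ≤ 0`,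
hence `B(x) → +∞`, `D(x) → −∞` as `x → −∞`, `B` has a smallest zero `β₁ < 0`,
and `D` has smallest zero `δ₁ = 0`. -/
theorem stmt5 (P Q : ℕ → ℝ → ℝ) (B D : ℝ → ℝ) (a₀ b₀ : ℝ)
    (ha₀ : 0 ≤ a₀) (hb₀ : 0 < b₀)
    (hP0 : ∀ x, P 0 x = 1) (hQ0 : ∀ x, Q 0 x = 0)
    (hP1 : ∀ x, P 1 x = (x - a₀) / b₀) (hQ1 : ∀ x, Q 1 x = 1 / b₀)
    (hsummB : ∀ x : ℝ, Summable (fun k => P k x * Q k 0))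
    (hsummD : ∀ x : ℝ, Summable (fun k => P k x * P k 0))
    (hB : ∀ x : ℝ, B x = -1 + x * ∑' k, P k x * Q k 0)
    (hD : ∀ x : ℝ, D x = x * ∑' k, P k x * P k 0)
    (hsignPQ : ∀ k, 1 ≤ k → ∀ x : ℝ, x ≤ 0 → P k x * Q k 0 < 0)
    (hsignPP : ∀ k, 1 ≤ k → ∀ x : ℝ, x ≤ 0 → 0 < P k x * P k 0)
    (hBcont : Continuous B) :
    (∀ x : ℝ, x ≤ 0 → x * (x - a₀) / b₀ ^ 2 - 1 ≤ B x ∧ D x ≤ x) ∧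
    Tendsto B atBot atTop ∧ Tendsto D atBot atBot ∧
    (∃ β₁ : ℝ, β₁ < 0 ∧ B β₁ = 0 ∧ ∀ x : ℝ, B x = 0 → β₁ ≤ x) ∧
    (D 0 = 0 ∧ ∀ x : ℝ, x < 0 → D x ≠ 0) :=
  stmt5_general P Q B D a₀ b₀ hb₀ hP0 hQ0 hP1 hQ1 hsummB hsummD hB hD hsignPQ hsignPP hBcont
end

section
/- For the Stieltjes case, the Nevanlinna functions A and C satisfy for all x ≤ 0: A(x) ≤ x/b_0² and C(x) ≥ 1 − (a_0/b_0²)x ≥ 1. In particular A(x) → −∞ as x → −∞, A has smallest zero α_1 = 0, and C has no zero on (−∞, 0]. -/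
open Filter Topology

/-- Bounds `A(x) ≤ x/b₀²` and `C(x) ≥ 1 − (a₀/b₀²)x ≥ 1` for
`x ≤ 0`; hence `A(x) → −∞` as `x → −∞`, `A` has smallest zero `α₁ = 0` and `C`
has no zero on `(−∞, 0]`. -/
theorem stmt6 (P Q : ℕ → ℝ → ℝ) (A C : ℝ → ℝ) (a₀ b₀ : ℝ)
    (ha₀ : 0 ≤ a₀) (hb₀ : 0 < b₀)
    (hQ0 : ∀ x, Q 0 x = 0)
    (hQQ1 : ∀ x, Q 1 x * Q 1 0 = 1 / b₀ ^ 2)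
    (hQP1 : ∀ x, Q 1 x * P 1 0 = -a₀ / b₀ ^ 2)
    (hsummA : ∀ x : ℝ, Summable (fun k => Q k x * Q k 0))
    (hsummC : ∀ x : ℝ, Summable (fun k => Q k x * P k 0))
    (hA : ∀ x : ℝ, A x = x * ∑' k, Q k x * Q k 0)
    (hC : ∀ x : ℝ, C x = 1 + x * ∑' k, Q k x * P k 0)
    (hsignQQ : ∀ k, 2 ≤ k → ∀ x : ℝ, x ≤ 0 → 0 < Q k x * Q k 0)
    (hsignQP : ∀ k, 2 ≤ k → ∀ x : ℝ, x ≤ 0 → Q k x * P k 0 < 0) :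
    (∀ x : ℝ, x ≤ 0 → A x ≤ x / b₀ ^ 2 ∧ 1 - (a₀ / b₀ ^ 2) * x ≤ C x ∧
      (1 : ℝ) ≤ 1 - (a₀ / b₀ ^ 2) * x) ∧
    Tendsto A atBot atBot ∧
    (A 0 = 0 ∧ ∀ x : ℝ, x < 0 → A x ≠ 0) ∧
    (∀ x : ℝ, x ≤ 0 → C x ≠ 0) := by
  have hb2 : (0:ℝ) < b₀ ^ 2 := by positivity
  -- sum lower bound for A
  have hSA : ∀ x : ℝ, x ≤ 0 → 1 / b₀ ^ 2 ≤ ∑' k, Q k x * Q k 0 := by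
    intro x hx
    have hnn : ∀ k, 0 ≤ Q k x * Q k 0 := by
      intro k
      match k with
      | 0 => simp [hQ0]
      | 1 => rw [hQQ1]; positivity
      | (n+2) => exact (hsignQQ (n+2) (by omega) x hx).le
    calc 1 / b₀ ^ 2 = Q 1 x * Q 1 0 := (hQQ1 x).symm
      _ ≤ _ := Summable.le_tsum (hsummA x) 1 (fun i _ => hnn i)
  have hSC : ∀ x : ℝ, x ≤ 0 → (∑' k, Q k x * P k 0) ≤ -a₀ / b₀ ^ 2 := by
    intro x hx
    have hnp : ∀ k, Q k x * P k 0 ≤ 0 := by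
      intro k
      match k with
      | 0 => simp [hQ0]
      | 1 => rw [hQP1]; apply div_nonpos_of_nonpos_of_nonneg <;> [linarith; positivity]
      | (n+2) => exact (hsignQP (n+2) (by omega) x hx).le
    have := Summable.le_tsum ((hsummC x).neg) 1 (fun i _ => by simpa using hnp i)
    rw [tsum_neg] at this
    have h1 : -(Q 1 x * P 1 0) = a₀ / b₀ ^ 2 := by rw [hQP1]; ring
    rw [h1] at this
    linarith [hQP1 x]
  have hmain : ∀ x : ℝ, x ≤ 0 → A x ≤ x / b₀ ^ 2 ∧ 1 - (a₀ / b₀ ^ 2) * x ≤ C x ∧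
      (1 : ℝ) ≤ 1 - (a₀ / b₀ ^ 2) * x := by
    intro x hx
    refine ⟨?_, ?_, ?_⟩
    · rw [hA, div_eq_mul_inv, ← one_div]
      exact mul_le_mul_of_nonpos_left (hSA x hx) hx
    · rw [hC]
      have := mul_le_mul_of_nonpos_left (hSC x hx) hx
      have : x * (-a₀ / b₀ ^ 2) ≤ x * ∑' k, Q k x * P k 0 := this
      have heq : x * (-a₀ / b₀ ^ 2) = -((a₀ / b₀ ^ 2) * x) := by ring
      linarith [heq ▸ this]
    · nlinarith [div_nonneg ha₀ hb2.le]
  refine ⟨hmain, ?_, ⟨?_, ?_⟩, ?_⟩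
  · have hdiv : Tendsto (fun x : ℝ => x / b₀ ^ 2) atBot atBot :=
      Tendsto.atBot_div_const hb2 tendsto_id
    apply tendsto_atBot_mono' atBot _ hdiv
    filter_upwards [eventually_le_atBot (0:ℝ)] with x hx
    exact (hmain x hx).1
  · simp [hA 0]
  · intro x hx
    have h1 := (hmain x hx.le).1
    have : x / b₀ ^ 2 < 0 := div_neg_of_neg_of_pos hx hb2
    linarith
  · intro x hx
    have := (hmain x hx).2
    nlinarith [this.1, this.2]
end

section
/- In the Stieltjes indet(S) case, each limit point ξ_k = lim_n x_{n,k} of the k-th zeros of P_n is a zero of the entire function F(z) = B(z)α − D(z); moreover the ξ_k are strictly increasing: if ξ_k = ξ_{k+1} for some k, then F and F' would share a zero, contradicting the simplicity of the zeros of F. -/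
open Filter Topology

/-- In the Stieltjes indet(S) case, each limit `ξ k` of the
`k`-th zeros of `P n` is a zero of `F = Bα − D`, and the `ξ k` are strictly
increasing (else `F` and `F'` would share a zero, contradicting simplicity). -/
theorem stmt9 (P : ℕ → ℂ → ℂ) (q : ℕ → ℝ) (F : ℂ → ℂ)
    (x y : ℕ → ℕ → ℝ) (ξ : ℕ → ℝ)
    (hP : ∀ n, Differentiable ℂ (P n)) (hF : Differentiable ℂ F)
    (hq : ∀ n, q n ≠ 0)
    (hconv : TendstoLocallyUniformly (fun n z => -P n z / (q n : ℂ)) F atTop)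
    (hconv' : TendstoLocallyUniformly (fun n z => -deriv (P n) z / (q n : ℂ)) (deriv F) atTop)
    (hFreal : ∀ z : ℂ, F z = 0 → z.im = 0)
    (hFsimple : ∀ z : ℂ, F z = 0 → deriv F z ≠ 0)
    (hFne : ∃ z : ℂ, F z ≠ 0)
    (hzero : ∀ n k, 1 ≤ k → k ≤ n → P n ((x n k : ℝ) : ℂ) = 0)
    (hordered : ∀ n k, 1 ≤ k → k < n → x n k < x n (k + 1))
    (hdec : ∀ n k, 1 ≤ k → k ≤ n → x (n + 1) k ≤ x n k)
    (hlim : ∀ k, 1 ≤ k → Tendsto (fun n => x (n + k) k) atTop (𝓝 (ξ k)))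
    (hcrit : ∀ n k, 1 ≤ k → k < n →
      x n k < y n k ∧ y n k < x n (k + 1) ∧ deriv (P n) ((y n k : ℝ) : ℂ) = 0) :
    ∀ k, 1 ≤ k → F ((ξ k : ℝ) : ℂ) = 0 ∧ ξ k < ξ (k + 1) := by
  -- full-sequence convergence of the `k`-th zeros
  have hxlim : ∀ k, 1 ≤ k → Tendsto (fun n => x n k) atTop (𝓝 (ξ k)) := by
    intro k hk
    exact (tendsto_add_atTop_iff_nat (f := fun n => x n k) k).mp (hlim k hk)
  have hxlimC : ∀ k, 1 ≤ k → Tendsto (fun n => ((x n k : ℝ) : ℂ)) atTop (𝓝 ((ξ k : ℝ) : ℂ)) :=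
    fun k hk => (Complex.continuous_ofReal.tendsto _).comp (hxlim k hk)
  -- each limit is a zero of F
  have hFzero : ∀ k, 1 ≤ k → F ((ξ k : ℝ) : ℂ) = 0 := by
    intro k hk
    have h := hconv.tendsto_comp hF.continuous.continuousAt (hxlimC k hk)
    have h0 : Tendsto (fun _ : ℕ => (0 : ℂ)) atTop (𝓝 (F ((ξ k : ℝ) : ℂ))) := by
      apply h.congr'
      filter_upwards [eventually_ge_atTop k] with n hn
      rw [hzero n k hk hn, neg_zero, zero_div]
    exact tendsto_nhds_unique h0 tendsto_const_nhds
  intro k hk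
  refine ⟨hFzero k hk, ?_⟩
  -- weak inequality
  have hle : ξ k ≤ ξ (k + 1) := by
    refine le_of_tendsto_of_tendsto (hxlim k hk) (hxlim (k + 1) (by omega)) ?_
    filter_upwards [eventually_gt_atTop k] with n hn
    exact (hordered n k hk hn).le
  rcases lt_or_eq_of_le hle with h | h
  · exact h
  -- equality case: derive a contradiction
  exfalso
  -- the critical points `y n k` are squeezed to `ξ k`
  have hylim : Tendsto (fun n => y n k) atTop (𝓝 (ξ k)) := by
    refine tendsto_of_tendsto_of_tendsto_of_le_of_le' (h := fun n => x n (k + 1)) (hxlim k hk) ?_ ?_ ?_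
    · rw [h]; exact hxlim (k + 1) (by omega)
    · filter_upwards [eventually_gt_atTop k] with n hn
      exact (hcrit n k hk hn).1.le
    · filter_upwards [eventually_gt_atTop k] with n hn
      exact (hcrit n k hk hn).2.1.le
  have hylimC : Tendsto (fun n => ((y n k : ℝ) : ℂ)) atTop (𝓝 ((ξ k : ℝ) : ℂ)) :=
    (Complex.continuous_ofReal.tendsto _).comp hylim
  -- deriv F is continuous (F is entire, hence analytic)
  have hFa : AnalyticOnNhd ℂ F Set.univ := fun z _ => hF.analyticAt z
  have hdFc : ContinuousAt (deriv F) ((ξ k : ℝ) : ℂ) :=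
    (hFa.deriv _ (Set.mem_univ _)).continuousAt
  have h' := hconv'.tendsto_comp hdFc hylimC
  have h0 : Tendsto (fun _ : ℕ => (0 : ℂ)) atTop (𝓝 (deriv F ((ξ k : ℝ) : ℂ))) := by
    apply h'.congr'
    filter_upwards [eventually_gt_atTop k] with n hn
    rw [(hcrit n k hk hn).2.2, neg_zero, zero_div]
  exact hFsimple _ (hFzero k hk) (tendsto_nhds_unique h0 tendsto_const_nhds)
end
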